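/- Under the Harten setup, regard Ŝ and F̂^{(i)} as functions of the conservative variables U = (ρ, m, e) on the open set D = {(ρ, m, e) : ρ > 0, (γ−1)(e − ‖m‖²/(2ρ)) > 0}, via V = m/ρ and p = (γ−1)(e − ‖m‖²/(2ρ)). Then for every U ∈ D and every i ∈ {1,…,d}, the matrix product Hess Ŝ(U) · J_i(U) is symmetric, where Hess Ŝ(U) is the Hessian matrix of Ŝ at U and J_i(U) is the Jacobian matrix of F̂^{(i)} at U; equivalently, (Hess Ŝ(U))·J_i(U) = J_i(U)^T·(Hess Ŝ(U)). -/

import Mathlib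

open Matrix

/-- Harten's entropy function `S = β·ρ·(p·ρ^(−γ))^(1/(α+γ))`. -/
noncomputable def hartenS (γ α β ρ p : ℝ) : ℝ :=
  β * ρ * (p * ρ ^ (-γ)) ^ (1 / (α + γ))

/-- The Euler flux `F^(i) = (ρV_i, ρV_iV + p·e_i, (e+p)V_i) ∈ ℝ^(d+2)`. -/
noncomputable def eulerFlux (d : ℕ) (γ ρ p : ℝ) (V : Fin d → ℝ) (i : Fin d) :
    Fin (d + 2) → ℝ :=
  Fin.cons (α := fun _ => ℝ) (ρ * V i)
    (Fin.snoc (fun j => ρ * V i * V j + p * (if j = i then 1 else 0))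
      ((p / (γ - 1) + ρ * (∑ k, V k ^ 2) / 2 + p) * V i))

/-- Pressure as a function of the conservative variables `U = (ρ, m, e)`. -/
noncomputable def pOf (d : ℕ) (γ : ℝ) (U : Fin (d + 2) → ℝ) : ℝ :=
  (γ - 1) * (U (Fin.last (d + 1)) -
    (∑ i : Fin d, U (Fin.castSucc (Fin.succ i)) ^ 2) / (2 * U 0))

/-- Velocity `V = m/ρ` as a function of the conservative variables. -/
noncomputable def vOf (d : ℕ) (U : Fin (d + 2) → ℝ) : Fin d → ℝ :=
  fun i => U (Fin.castSucc (Fin.succ i)) / U 0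

/-- Harten's entropy function `Ŝ` as a function of the conservative variables. -/
noncomputable def hartenShat (d : ℕ) (γ α β : ℝ) (U : Fin (d + 2) → ℝ) : ℝ :=
  hartenS γ α β (U 0) (pOf d γ U)

/-- Euler flux `F̂^(i)` as a function of the conservative variables. -/
noncomputable def fluxHat (d : ℕ) (γ : ℝ) (i : Fin d) (U : Fin (d + 2) → ℝ) :
    Fin (d + 2) → ℝ :=
  eulerFlux d γ (U 0) (pOf d γ U) (vOf d U) i

/-- Hessian matrix of `Ŝ` at `U`. -/
noncomputable def hessShat (d : ℕ) (γ α β : ℝ) (U : Fin (d + 2) → ℝ) :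
    Matrix (Fin (d + 2)) (Fin (d + 2)) ℝ :=
  Matrix.of fun j k =>
    fderiv ℝ (fun X => fderiv ℝ (hartenShat d γ α β) X (Pi.single k 1)) U
      (Pi.single j 1)

/-- Jacobian matrix of `F̂^(i)` at `U`. -/
noncomputable def jacFluxHat (d : ℕ) (γ : ℝ) (i : Fin d) (U : Fin (d + 2) → ℝ) :
    Matrix (Fin (d + 2)) (Fin (d + 2)) ℝ :=
  Matrix.of fun j k => fderiv ℝ (fluxHat d γ i) U (Pi.single k 1) j

/-!
Write `ρ = U 0`, `V = m/ρ`, `s = p ρ^(-γ)`, so that `Ŝ = β ρ s^(1/(α+γ))`, and let `q̂ = Ŝ V_i`.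
The mass equation `D F̂_0 = D(ρ V_i)` and the pressure equation
`Dp ∘ DF̂ = V_i Dp + γ p DV_i` combine into `Ds ∘ DF̂ = V_i Ds`: `s`, hence any function of `s`,
is advected. From this one gets the compatibility relation `Dq̂ = DŜ ∘ DF̂` of the entropy pair
on a neighbourhood of `U`. Differentiating it once more and using the symmetry of the second
derivatives of `q̂` and of `F̂` gives `D²Ŝ(v, DF̂ w) = D²Ŝ(w, DF̂ v)`, which in coordinates is the
symmetry of `Hess Ŝ · J_i`; together with the symmetry of `Hess Ŝ` it also gives
`Hess Ŝ · J_i = J_iᵀ · Hess Ŝ`.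
-/

open Filter Topology

theorem fderiv_apply_apply_of_hasFDerivAt {ι E : Type*} [Fintype ι] [NormedAddCommGroup E]
    [NormedSpace ℝ E] {F : E → ι → ℝ} {X : E} {l : ι} {L : E →L[ℝ] ℝ}
    (hF : DifferentiableAt ℝ F X) (h : HasFDerivAt (fun Y => F Y l) L X) (v : E) :
    fderiv ℝ F X v l = L v := by
  rw [← h.fderiv, fderiv_apply hF]
  rfl

theorem HasFDerivAt.fun_sum_sq {ι E : Type*} [NormedAddCommGroup E] [NormedSpace ℝ E] {X : E}
    (s : Finset ι) {f : ι → E → ℝ} {f' : ι → E →L[ℝ] ℝ}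
    (h : ∀ k ∈ s, HasFDerivAt (f k) (f' k) X) :
    HasFDerivAt (fun Y => ∑ k ∈ s, f k Y ^ 2) ((2 : ℝ) • ∑ k ∈ s, f k X • f' k) X := by
  refine (HasFDerivAt.fun_sum fun k hk => (h k hk).pow 2).congr_fderiv ?_
  simp [Finset.smul_sum, smul_smul, mul_comm]

theorem fderiv_fderiv_apply_comm_of_fderiv_eq_comp {E : Type*} [NormedAddCommGroup E]
    [NormedSpace ℝ E] {S q : E → ℝ} {F : E → E} {U : E}
    (hS : ContDiffAt ℝ 2 S U) (hq : ContDiffAt ℝ 2 q U) (hF : ContDiffAt ℝ 2 F U)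
    (hqSF : fderiv ℝ q =ᶠ[𝓝 U] fun X => (fderiv ℝ S X).comp (fderiv ℝ F X)) (v w : E) :
    fderiv ℝ (fderiv ℝ S) U v (fderiv ℝ F U w) = fderiv ℝ (fderiv ℝ S) U w (fderiv ℝ F U v) := by
  have hdS := (hS.fderiv_right (m := 1) le_rfl).differentiableAt one_ne_zero
  have hdF := (hF.fderiv_right (m := 1) le_rfl).differentiableAt one_ne_zero
  have hq2 := hq.isSymmSndFDerivAt (by simp) v w
  rw [hqSF.fderiv_eq, (hdS.hasFDerivAt.clm_comp hdF.hasFDerivAt).fderiv] at hq2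
  simp only [_root_.add_apply, ContinuousLinearMap.comp_apply, ContinuousLinearMap.compL_apply,
    ContinuousLinearMap.flip_apply, hF.isSymmSndFDerivAt (by simp) v w] at hq2
  linarith

namespace LinearMap

variable {ι R : Type*} [Fintype ι] [DecidableEq ι] [CommSemiring R]

theorem isSymm_toMatrix₂'_mul_toMatrix' (B : (ι → R) →ₗ[R] (ι → R) →ₗ[R] R)
    (A : (ι → R) →ₗ[R] ι → R) (h : ∀ v w, B v (A w) = B w (A v)) :
    (toMatrix₂' R B * toMatrix' A).IsSymm := by
  ext j k
  simp [← toMatrix₂'_compl₂, toMatrix₂'_apply, h]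

theorem toMatrix₂'_mul_toMatrix'_eq_transpose_mul (B : (ι → R) →ₗ[R] (ι → R) →ₗ[R] R)
    (A : (ι → R) →ₗ[R] ι → R) (hB : ∀ v w, B v w = B w v) (h : ∀ v w, B v (A w) = B w (A v)) :
    toMatrix₂' R B * toMatrix' A = (toMatrix' A)ᵀ * toMatrix₂' R B := by
  rw [← toMatrix₂'_compl₂, ← toMatrix₂'_comp]
  congr 1
  ext v w
  simp [h, hB (A _)]

end LinearMap

section Coordinates

variable {ι : Type*} [Fintype ι] [DecidableEq ι]

theorem of_fderiv_fderiv_eq_toMatrix₂' {f : (ι → ℝ) → ℝ} {U : ι → ℝ}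
    (hf : DifferentiableAt ℝ (fderiv ℝ f) U) :
    Matrix.of (fun j k => fderiv ℝ (fun X => fderiv ℝ f X (Pi.single k 1)) U (Pi.single j 1))
      = LinearMap.toMatrix₂' ℝ (fderiv ℝ (fderiv ℝ f) U).toLinearMap₁₂ := by
  ext j k
  simp [LinearMap.toMatrix₂'_apply, fderiv_clm_apply hf (differentiableAt_const _)]

theorem of_fderiv_eq_toMatrix' (F : (ι → ℝ) → ι → ℝ) (U : ι → ℝ) :
    Matrix.of (fun j k => fderiv ℝ F U (Pi.single k 1) j)
      = LinearMap.toMatrix' (fderiv ℝ F U : (ι → ℝ) →ₗ[ℝ] ι → ℝ) := by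
  ext j k
  simp [LinearMap.toMatrix'_apply]

end Coordinates

section Euler

variable {d : ℕ} {γ : ℝ} {X : Fin (d + 2) → ℝ}

theorem fluxHat_apply_zero (i : Fin d) (X : Fin (d + 2) → ℝ) :
    fluxHat d γ i X 0 = X 0 * vOf d X i := rfl

theorem fluxHat_apply_momentum (i k : Fin d) (X : Fin (d + 2) → ℝ) :
    fluxHat d γ i X k.succ.castSucc
      = X 0 * vOf d X i * vOf d X k + pOf d γ X * if k = i then 1 else 0 := by
  simp [fluxHat, eulerFlux]

theorem fluxHat_apply_energy (i : Fin d) (X : Fin (d + 2) → ℝ) :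
    fluxHat d γ i X (Fin.last (d + 1))
      = (pOf d γ X / (γ - 1) + X 0 * (∑ k, vOf d X k ^ 2) / 2 + pOf d γ X) * vOf d X i := by
  simp [fluxHat, eulerFlux, ← Fin.succ_last]

theorem pOf_eq_energy_sub_kinetic (hX : X 0 ≠ 0) :
    pOf d γ X = (γ - 1) * (X (Fin.last (d + 1)) - X 0 * (∑ k, vOf d X k ^ 2) / 2) := by
  simp only [pOf, vOf, div_pow, ← Finset.sum_div]
  field_simp

theorem contDiffAt_pOf {n : WithTop ℕ∞} (hX : X 0 ≠ 0) : ContDiffAt ℝ n (pOf d γ) X := by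
  unfold pOf
  fun_prop (disch := simpa using hX)

theorem contDiffAt_vOf {n : WithTop ℕ∞} (hX : X 0 ≠ 0) (k : Fin d) :
    ContDiffAt ℝ n (fun Y => vOf d Y k) X := by
  unfold vOf
  fun_prop (disch := exact hX)

theorem contDiffAt_fluxHat {n : WithTop ℕ∞} (hX : X 0 ≠ 0) (i : Fin d) :
    ContDiffAt ℝ n (fluxHat d γ i) X := by
  have hp := contDiffAt_pOf (n := n) (γ := γ) hX
  have hV := contDiffAt_vOf (n := n) hX
  refine contDiffAt_pi.2 (Fin.cases ?_ (Fin.lastCases ?_ fun k => ?_))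
  · simp only [fluxHat_apply_zero]; fun_prop
  · simp only [Fin.succ_last, fluxHat_apply_energy]; fun_prop
  · simp only [Fin.succ_castSucc, fluxHat_apply_momentum]; fun_prop

theorem hasFDerivAt_pOf (hX : X 0 ≠ 0) :
    HasFDerivAt (pOf d γ) (fderiv ℝ (pOf d γ) X) X :=
  ((contDiffAt_pOf hX).differentiableAt one_ne_zero).hasFDerivAt

theorem hasFDerivAt_vOf (hX : X 0 ≠ 0) (k : Fin d) :
    HasFDerivAt (fun Y => vOf d Y k) (fderiv ℝ (fun Y => vOf d Y k) X) X :=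
  ((contDiffAt_vOf hX k).differentiableAt one_ne_zero).hasFDerivAt

theorem differentiableAt_fluxHat (hX : X 0 ≠ 0) (i : Fin d) :
    DifferentiableAt ℝ (fluxHat d γ i) X :=
  (contDiffAt_fluxHat hX i).differentiableAt one_ne_zero

/-- Differentiated form of `m_k = ρ V_k`. -/
theorem apply_momentum_eq_fderiv_vOf (hX : X 0 ≠ 0) (k : Fin d) (w : Fin (d + 2) → ℝ) :
    w k.succ.castSucc = vOf d X k * w 0 + X 0 * fderiv ℝ (fun Y => vOf d Y k) X w := by
  have h := ((hasFDerivAt_apply (0 : Fin (d + 2)) X).fun_mul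
    (hasFDerivAt_vOf hX k)).congr_of_eventuallyEq
    (((continuous_apply 0).continuousAt.eventually_ne hX).mono fun Y hY => by simp [vOf, field] :
      (fun Y : Fin (d + 2) → ℝ => Y k.succ.castSucc) =ᶠ[𝓝 X] _)
  have e := DFunLike.congr_fun ((hasFDerivAt_apply _ X).unique h) w
  simp only [ContinuousLinearMap.proj_apply, _root_.add_apply, _root_.smul_apply,
    smul_eq_mul] at e
  linarith

theorem fderiv_pOf_apply (hX : X 0 ≠ 0) (w : Fin (d + 2) → ℝ) :
    fderiv ℝ (pOf d γ) X w = (γ - 1) * (w (Fin.last (d + 1))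
      - ∑ k, vOf d X k * w k.succ.castSucc + w 0 * (∑ k, vOf d X k ^ 2) / 2) := by
  have h := ((hasFDerivAt_apply (Fin.last (d + 1)) X).fun_sub (((hasFDerivAt_apply 0 X).fun_mul
    (HasFDerivAt.fun_sum_sq Finset.univ fun k _ => hasFDerivAt_vOf hX k)).mul_const 2⁻¹)).const_mul
    (γ - 1)
  rw [(h.congr_of_eventuallyEq (((continuous_apply 0).continuousAt.eventually_ne hX).mono
    fun Y hY => by simp [pOf_eq_energy_sub_kinetic hY, div_eq_mul_inv])).fderiv]
  have hm : ∑ k, vOf d X k * w k.succ.castSucc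
      = w 0 * ∑ k, vOf d X k ^ 2 + X 0 * ∑ k, vOf d X k * fderiv ℝ (fun Y => vOf d Y k) X w := by
    simp only [apply_momentum_eq_fderiv_vOf hX, Finset.mul_sum, ← Finset.sum_add_distrib]
    exact Finset.sum_congr rfl fun k _ => by ring
  rw [hm]
  simp only [ContinuousLinearMap.proj_apply, _root_.add_apply, _root_.sub_apply, _root_.smul_apply,
    FunLike.coe_sum, Finset.sum_apply, smul_eq_mul]
  ring

theorem fderiv_fluxHat_apply_zero (hX : X 0 ≠ 0) (i : Fin d) (v : Fin (d + 2) → ℝ) :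
    fderiv ℝ (fluxHat d γ i) X v 0
      = v 0 * vOf d X i + X 0 * fderiv ℝ (fun Y => vOf d Y i) X v := by
  rw [fderiv_apply_apply_of_hasFDerivAt (differentiableAt_fluxHat hX i)
    ((hasFDerivAt_apply (0 : Fin (d + 2)) X).fun_mul (hasFDerivAt_vOf hX i))]
  simp
  ring

theorem fderiv_fluxHat_apply_momentum (hX : X 0 ≠ 0) (i k : Fin d) (v : Fin (d + 2) → ℝ) :
    fderiv ℝ (fluxHat d γ i) X v k.succ.castSucc
      = v 0 * vOf d X i * vOf d X k + X 0 * fderiv ℝ (fun Y => vOf d Y i) X v * vOf d X k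
        + X 0 * vOf d X i * fderiv ℝ (fun Y => vOf d Y k) X v
        + fderiv ℝ (pOf d γ) X v * if k = i then 1 else 0 := by
  have h := (((hasFDerivAt_apply (0 : Fin (d + 2)) X).fun_mul (hasFDerivAt_vOf hX i)).fun_mul
    (hasFDerivAt_vOf hX k)).fun_add ((hasFDerivAt_pOf (γ := γ) hX).mul_const (if k = i then 1 else 0))
  rw [fderiv_apply_apply_of_hasFDerivAt (differentiableAt_fluxHat hX i)
    (h.congr_of_eventuallyEq (.of_forall fun Y => fluxHat_apply_momentum i k Y))]
  split_ifs <;> simp <;> ring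

theorem fderiv_fluxHat_apply_energy (hX : X 0 ≠ 0) (i : Fin d) (v : Fin (d + 2) → ℝ) :
    fderiv ℝ (fluxHat d γ i) X v (Fin.last (d + 1))
      = (fderiv ℝ (pOf d γ) X v / (γ - 1) + v 0 * (∑ k, vOf d X k ^ 2) / 2
          + X 0 * ∑ k, vOf d X k * fderiv ℝ (fun Y => vOf d Y k) X v + fderiv ℝ (pOf d γ) X v)
          * vOf d X i
        + (pOf d γ X / (γ - 1) + X 0 * (∑ k, vOf d X k ^ 2) / 2 + pOf d γ X)
          * fderiv ℝ (fun Y => vOf d Y i) X v := by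
  have hp := hasFDerivAt_pOf (γ := γ) hX
  have h := (((hp.mul_const (γ - 1)⁻¹).fun_add (((hasFDerivAt_apply (0 : Fin (d + 2)) X).fun_mul
    (HasFDerivAt.fun_sum_sq Finset.univ fun k _ => hasFDerivAt_vOf hX k)).mul_const 2⁻¹)).fun_add
    hp).fun_mul (hasFDerivAt_vOf hX i)
  rw [fderiv_apply_apply_of_hasFDerivAt (differentiableAt_fluxHat hX i)
    (h.congr_of_eventuallyEq (.of_forall fun Y => by
      simp [fluxHat_apply_energy, div_eq_mul_inv]))]
  simp
  ring

/-- The pressure equation `p_t + V·∇p + γ p ∇·V = 0`, in the direction `i`. -/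
theorem fderiv_pOf_fderiv_fluxHat (hγ : γ ≠ 1) (hX : X 0 ≠ 0) (i : Fin d)
    (v : Fin (d + 2) → ℝ) :
    fderiv ℝ (pOf d γ) X (fderiv ℝ (fluxHat d γ i) X v)
      = vOf d X i * fderiv ℝ (pOf d γ) X v
        + γ * pOf d γ X * fderiv ℝ (fun Y => vOf d Y i) X v := by
  set V' := fun k => fderiv ℝ (fun Y => vOf d Y k) X v
  have hsum : ∑ k, vOf d X k * fderiv ℝ (fluxHat d γ i) X v k.succ.castSucc
      = (v 0 * vOf d X i + X 0 * V' i) * ∑ k, vOf d X k ^ 2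
        + X 0 * vOf d X i * ∑ k, vOf d X k * V' k + fderiv ℝ (pOf d γ) X v * vOf d X i := by
    calc _ = ∑ k, ((v 0 * vOf d X i + X 0 * V' i) * vOf d X k ^ 2
          + X 0 * vOf d X i * (vOf d X k * V' k)
          + if k = i then fderiv ℝ (pOf d γ) X v * vOf d X k else 0) :=
          Finset.sum_congr rfl fun k _ => by
            rw [fderiv_fluxHat_apply_momentum hX]; split_ifs <;> ring
      _ = _ := by
        rw [Finset.sum_add_distrib, Finset.sum_add_distrib, ← Finset.mul_sum, ← Finset.mul_sum,
          Finset.sum_ite_eq']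
        simp
  have hγ' : γ - 1 ≠ 0 := sub_ne_zero.2 hγ
  rw [fderiv_pOf_apply hX, hsum, fderiv_fluxHat_apply_energy hX, fderiv_fluxHat_apply_zero hX]
  field_simp
  ring

/-- For smooth solutions, such a `g` is transported along particle paths. -/
def IsAdvectedAt (d : ℕ) (γ : ℝ) (i : Fin d) (g : (Fin (d + 2) → ℝ) → ℝ)
    (X : Fin (d + 2) → ℝ) : Prop :=
  (fderiv ℝ g X).comp (fderiv ℝ (fluxHat d γ i) X) = vOf d X i • fderiv ℝ g X

theorem IsAdvectedAt.comp {i : Fin d} {g : (Fin (d + 2) → ℝ) → ℝ} {h : ℝ → ℝ}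
    (hadv : IsAdvectedAt d γ i g X) (hh : DifferentiableAt ℝ h (g X))
    (hg : DifferentiableAt ℝ g X) : IsAdvectedAt d γ i (h ∘ g) X := by
  rw [IsAdvectedAt, fderiv_comp X hh hg, ContinuousLinearMap.comp_assoc, hadv,
    ContinuousLinearMap.comp_smul]

noncomputable def sOf (d : ℕ) (γ : ℝ) (X : Fin (d + 2) → ℝ) : ℝ :=
  pOf d γ X * X 0 ^ (-γ)

theorem sOf_pos (hX : 0 < X 0) (hp : 0 < pOf d γ X) : 0 < sOf d γ X :=
  mul_pos hp (Real.rpow_pos_of_pos hX _)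

theorem contDiffAt_sOf {n : WithTop ℕ∞} (hX : X 0 ≠ 0) : ContDiffAt ℝ n (sOf d γ) X :=
  (contDiffAt_pOf hX).mul ((contDiffAt_apply ℝ ℝ 0 X).rpow_const_of_ne hX)

theorem isAdvectedAt_sOf (hγ : γ ≠ 1) (hX : X 0 ≠ 0) (i : Fin d) :
    IsAdvectedAt d γ i (sOf d γ) X := by
  have hs : HasFDerivAt (sOf d γ) _ X := (hasFDerivAt_pOf hX).fun_mul
    ((hasFDerivAt_apply (0 : Fin (d + 2)) X).rpow_const (p := -γ) (.inl hX))
  rw [IsAdvectedAt, hs.fderiv]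
  ext v
  simp only [ContinuousLinearMap.comp_apply, _root_.add_apply, _root_.smul_apply, smul_eq_mul,
    ContinuousLinearMap.proj_apply, fderiv_pOf_fderiv_fluxHat hγ hX,
    fderiv_fluxHat_apply_zero hX, Real.rpow_sub_one hX]
  field_simp
  ring

theorem fderiv_mul_vOf_eq_comp_fderiv_fluxHat {i : Fin d} {g : (Fin (d + 2) → ℝ) → ℝ}
    (β : ℝ) (hX : X 0 ≠ 0) (hg : DifferentiableAt ℝ g X) (hadv : IsAdvectedAt d γ i g X) :
    fderiv ℝ (fun Y => β * Y 0 * g Y * vOf d Y i) X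
      = (fderiv ℝ (fun Y => β * Y 0 * g Y) X).comp (fderiv ℝ (fluxHat d γ i) X) := by
  have hS := ((hasFDerivAt_apply (0 : Fin (d + 2)) X).const_mul β).fun_mul hg.hasFDerivAt
  rw [(hS.fun_mul (hasFDerivAt_vOf hX i)).fderiv, hS.fderiv]
  ext v
  have hv := DFunLike.congr_fun hadv v
  simp only [ContinuousLinearMap.comp_apply, _root_.smul_apply, smul_eq_mul] at hv
  simp only [ContinuousLinearMap.comp_apply, _root_.add_apply, _root_.smul_apply, smul_eq_mul,
    ContinuousLinearMap.proj_apply, hv, fderiv_fluxHat_apply_zero hX]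
  ring

theorem hartenShat_eq_comp_sOf (d : ℕ) (γ α β : ℝ) :
    hartenShat d γ α β = fun Y => β * Y 0 * ((fun t => t ^ (1 / (α + γ))) ∘ sOf d γ) Y :=
  rfl

theorem contDiffAt_hartenShat {n : WithTop ℕ∞} (α β : ℝ) (hX : 0 < X 0) (hp : 0 < pOf d γ X) :
    ContDiffAt ℝ n (hartenShat d γ α β) X := by
  rw [hartenShat_eq_comp_sOf]
  exact (contDiffAt_const.mul (contDiffAt_apply ℝ ℝ 0 X)).mul
    ((contDiffAt_sOf hX.ne').rpow_const_of_ne (sOf_pos hX hp).ne')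

theorem fderiv_hartenShat_mul_vOf (hγ : γ ≠ 1) (α β : ℝ) (hX : 0 < X 0) (hp : 0 < pOf d γ X)
    (i : Fin d) :
    fderiv ℝ (fun Y => hartenShat d γ α β Y * vOf d Y i) X
      = (fderiv ℝ (hartenShat d γ α β) X).comp (fderiv ℝ (fluxHat d γ i) X) := by
  have hs := (contDiffAt_sOf (n := 1) (γ := γ) hX.ne').differentiableAt one_ne_zero
  have hpow := Real.differentiableAt_rpow_const_of_ne (1 / (α + γ)) (sOf_pos hX hp).ne'
  rw [hartenShat_eq_comp_sOf]
  exact fderiv_mul_vOf_eq_comp_fderiv_fluxHat β hX.ne' (hpow.comp X hs)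
    ((isAdvectedAt_sOf hγ hX.ne' i).comp hpow hs)

end Euler

theorem hessShat_mul_jacFluxHat_isSymm_general
    (d : ℕ) (γ α β : ℝ) (hγ : 1 < γ)
    (U : Fin (d + 2) → ℝ) (hρ : 0 < U 0) (hp : 0 < pOf d γ U) (i : Fin d) :
    (hessShat d γ α β U * jacFluxHat d γ i U).IsSymm ∧
      hessShat d γ α β U * jacFluxHat d γ i U
        = (jacFluxHat d γ i U)ᵀ * hessShat d γ α β U := by
  have hD : ∀ᶠ X in 𝓝 U, 0 < X 0 ∧ 0 < pOf d γ X :=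
    ((continuous_apply 0).continuousAt.eventually (lt_mem_nhds hρ)).and
      ((contDiffAt_pOf (n := 0) hρ.ne').continuousAt.eventually (lt_mem_nhds hp))
  have hS := contDiffAt_hartenShat (n := 2) (γ := γ) α β hρ hp
  have hcomm := fderiv_fderiv_apply_comm_of_fderiv_eq_comp hS
    (hS.mul (contDiffAt_vOf hρ.ne' i)) (contDiffAt_fluxHat hρ.ne' i)
    (hD.mono fun X hX => fderiv_hartenShat_mul_vOf hγ.ne' α β hX.1 hX.2 i)
  rw [hessShat, jacFluxHat, of_fderiv_fderiv_eq_toMatrix₂'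
    ((hS.fderiv_right (m := 1) le_rfl).differentiableAt one_ne_zero), of_fderiv_eq_toMatrix']
  exact ⟨LinearMap.isSymm_toMatrix₂'_mul_toMatrix' _ _ hcomm,
    LinearMap.toMatrix₂'_mul_toMatrix'_eq_transpose_mul _ _ (hS.isSymmSndFDerivAt (by simp)) hcomm⟩

/-- Under the Harten setup, for every conservative state `U` in
`D = {(ρ, m, e) : ρ > 0, (γ−1)(e − ‖m‖²/(2ρ)) > 0}` and every `i`, the product
`Hess Ŝ(U) · J_i(U)` of the Hessian of Harten's entropy function and the Euler flux
Jacobian is symmetric; equivalently `Hess Ŝ(U)·J_i(U) = J_i(U)ᵀ·Hess Ŝ(U)`. -/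
theorem hessShat_mul_jacFluxHat_isSymm
    (d : ℕ) (hd : 1 ≤ d) (γ α β : ℝ) (hγ : 1 < γ) (hα : 0 < α ∨ α < -γ)
    (hβ : β = -(γ + α) / (γ - 1))
    (U : Fin (d + 2) → ℝ) (hρ : 0 < U 0) (hp : 0 < pOf d γ U) (i : Fin d) :
    (hessShat d γ α β U * jacFluxHat d γ i U).IsSymm ∧
      hessShat d γ α β U * jacFluxHat d γ i U
        = (jacFluxHat d γ i U)ᵀ * hessShat d γ α β U :=
  hessShat_mul_jacFluxHat_isSymm_general d γ α β hγ U hρ hp i
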